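/- Let N be a positive even integer and l an integer with 0 ≤ l ≤ N/2. Then Σ_{n=1}^{N-1} (−1)^n · sin²(n l π/N) / sin²(n π/N) = −l². -/

import Mathlib

open Real Finset

/-!
Write `S t` for the sum with `l` replaced by a real parameter `t`. With `x = nπ/N`, the identity
`sin² (a + x) + sin² (a - x) = 2 sin² a + 2 cos 2a · sin² x` cancels the denominators and gives
`S (t + 1) + S (t - 1) - 2 S t = 2 ∑ (-1)ⁿ cos (2tnπ/N)`. For `N` even and `0 ≤ m < N/2`,
`(-1)ⁿ cos (2mnπ/N) = cos (na)` with `a = (2m + N)π/N` not a multiple of `2π` while `Na/2` is a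
multiple of `π`, so its sum over `0 ≤ n < N` vanishes (`Real.sum_cos`) and its sum over
`1 ≤ n ≤ N - 1` is `-1`. Hence `S` has second difference `-2` on `0, …, N/2`, and with `S 0 = 0` and
`S 1 = S (-1) = -1` this forces `S l = -l²`.
-/

lemma sin_add_sq_add_sin_sub_sq (a x : ℝ) :
    sin (a + x) ^ 2 + sin (a - x) ^ 2 = 2 * sin a ^ 2 + 2 * cos (2 * a) * sin x ^ 2 := by
  rw [sin_add, sin_sub, cos_two_mul]
  linear_combination (2 * sin a ^ 2) * sin_sq_add_cos_sq x - (2 * sin x ^ 2) * sin_sq_add_cos_sq a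

lemma eq_neg_sq_of_add_two_add_eq {f : ℕ → ℝ} {L : ℕ} (h0 : f 0 = 0) (h1 : f 1 = -1)
    (hstep : ∀ l, l + 2 ≤ L → f (l + 2) + f l = 2 * f (l + 1) - 2) (l : ℕ) (hl : l ≤ L) :
    f l = -l ^ 2 := by
  induction l using Nat.twoStepInduction with
  | zero => simp [h0]
  | one => simp [h1]
  | more l ih₀ ih₁ =>
    rw [eq_sub_of_add_eq (hstep l hl), ih₁ (by omega), ih₀ (by omega)]
    push_cast
    ring

lemma sum_range_neg_one_pow_mul_cos {N m : ℕ} (hN : Even N) (hm : 2 * m < N) :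
    ∑ n ∈ range N, (-1) ^ n * cos (2 * m * n * π / N) = 0 := by
  have hN0 : (N : ℝ) ≠ 0 := by
    have : 0 < N := by omega
    positivity
  set a : ℝ := (2 * m + N) * π / N
  have hterm (n : ℕ) : (-1) ^ n * cos (2 * m * n * π / N) = cos (a * n + 0) := by
    rw [add_zero, ← cos_add_nat_mul_pi]
    congr 1
    simp only [a]
    field_simp
  have ha (k : ℤ) : a ≠ k * (2 * π) := by
    intro hk
    have hkR : (2 * m + N : ℝ) = 2 * k * N := by
      simp only [a] at hk
      field_simp at hk
      linear_combination hk
    have hkZ : (2 * m + N : ℤ) = 2 * k * N := by exact_mod_cast hkR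
    have : (0 : ℤ) < N := by omega
    rcases le_or_gt k 0 with hk0 | hk0 <;> nlinarith
  obtain ⟨j, hj⟩ := hN
  rw [sum_congr rfl fun n _ => hterm n, sum_cos N ha,
    show N * a / 2 = (m + j : ℕ) * π by simp only [a]; field_simp; rw [hj]; push_cast; ring,
    sin_nat_mul_pi, zero_mul, zero_div]

lemma sum_Icc_neg_one_pow_mul_cos {N m : ℕ} (hN : Even N) (hm : 2 * m < N) :
    ∑ n ∈ Icc 1 (N - 1), (-1) ^ n * cos (2 * m * n * π / N) = -1 := by
  have h := sum_range_neg_one_pow_mul_cos hN hm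
  rw [range_eq_Ico, sum_eq_sum_Ico_succ_bot (by omega),
    ← Icc_sub_one_right_eq_Ico_of_not_isMin (by simp; omega)] at h
  simpa using eq_neg_of_add_eq_zero_right h

lemma sin_nat_mul_pi_div_ne_zero {N n : ℕ} (hn : n ∈ Icc 1 (N - 1)) : sin (n * π / N) ≠ 0 := by
  rw [mem_Icc] at hn
  have hn₀ : (0 : ℝ) < n := by exact_mod_cast (by omega : 0 < n)
  have hnN : (n : ℝ) < N := by exact_mod_cast (by omega : n < N)
  refine (sin_pos_of_pos_of_lt_pi (div_pos (mul_pos hn₀ pi_pos) (hn₀.trans hnN)) ?_).ne'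
  rw [div_lt_iff₀ (hn₀.trans hnN)]
  nlinarith [pi_pos]

noncomputable def alternatingSinSqRatioSum (N : ℕ) (t : ℝ) : ℝ :=
  ∑ n ∈ Icc 1 (N - 1), (-1) ^ n * sin (n * t * π / N) ^ 2 / sin (n * π / N) ^ 2

lemma alternatingSinSqRatioSum_zero (N : ℕ) : alternatingSinSqRatioSum N 0 = 0 := by
  simp [alternatingSinSqRatioSum]

lemma alternatingSinSqRatioSum_neg (N : ℕ) (t : ℝ) :
    alternatingSinSqRatioSum N (-t) = alternatingSinSqRatioSum N t := by
  simp [alternatingSinSqRatioSum, neg_div]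

lemma alternatingSinSqRatioSum_add_one_add_sub_one (N : ℕ) (t : ℝ) :
    alternatingSinSqRatioSum N (t + 1) + alternatingSinSqRatioSum N (t - 1) =
      2 * alternatingSinSqRatioSum N t +
        2 * ∑ n ∈ Icc 1 (N - 1), (-1) ^ n * cos (2 * t * n * π / N) := by
  simp only [alternatingSinSqRatioSum, ← sum_add_distrib, mul_sum]
  refine sum_congr rfl fun n hn => ?_
  have hs := sin_nat_mul_pi_div_ne_zero hn
  have h := sin_add_sq_add_sin_sub_sq (n * t * π / N) (n * π / N)
  rw [show n * t * π / N + n * π / N = n * (t + 1) * π / N by ring,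
    show n * t * π / N - n * π / N = n * (t - 1) * π / N by ring,
    show 2 * (n * t * π / N) = 2 * t * n * π / N by ring] at h
  calc _ = (-1) ^ n * (sin (n * (t + 1) * π / N) ^ 2 + sin (n * (t - 1) * π / N) ^ 2) /
        sin (n * π / N) ^ 2 := by ring
    _ = _ := by rw [h]; field_simp

lemma alternatingSinSqRatioSum_one {N : ℕ} (hN : Even N) (hN₀ : 0 < N) :
    alternatingSinSqRatioSum N 1 = -1 := by
  have h := alternatingSinSqRatioSum_add_one_add_sub_one N 0
  have hcos := sum_Icc_neg_one_pow_mul_cos hN (m := 0) (by omega)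
  rw [Nat.cast_zero] at hcos
  rw [zero_add, zero_sub, alternatingSinSqRatioSum_neg, alternatingSinSqRatioSum_zero, hcos] at h
  linarith

lemma alternatingSinSqRatioSum_nat_add_two {N l : ℕ} (hN : Even N) (hl : 2 * (l + 1) < N) :
    alternatingSinSqRatioSum N ↑(l + 2) + alternatingSinSqRatioSum N l =
      2 * alternatingSinSqRatioSum N ↑(l + 1) - 2 := by
  have h := alternatingSinSqRatioSum_add_one_add_sub_one N ↑(l + 1)
  rw [sum_Icc_neg_one_pow_mul_cos hN hl] at h
  push_cast at h ⊢
  rw [add_assoc, one_add_one_eq_two, add_sub_cancel_right] at h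
  linarith

theorem alternating_cycle_sum_general (N l : ℕ) (hNeven : Even N) (hl : l ≤ N / 2) :
    ∑ n ∈ Finset.Icc 1 (N - 1),
      (-1 : ℝ) ^ n * (Real.sin (n * l * Real.pi / N)) ^ 2 / (Real.sin (n * Real.pi / N)) ^ 2
    = -(l : ℝ) ^ 2 := by
  obtain rfl | hl₀ := l.eq_zero_or_pos
  · simp
  exact eq_neg_sq_of_add_two_add_eq (f := fun l : ℕ => alternatingSinSqRatioSum N l)
    (by simpa using alternatingSinSqRatioSum_zero N)
    (by simpa using alternatingSinSqRatioSum_one hNeven (by omega))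
    (fun k hk => alternatingSinSqRatioSum_nat_add_two hNeven (by omega)) l hl

theorem alternating_cycle_sum (N l : ℕ) (hN : 0 < N) (hNeven : Even N) (hl : l ≤ N / 2) :
    ∑ n ∈ Finset.Icc 1 (N - 1),
      (-1 : ℝ) ^ n * (Real.sin (n * l * Real.pi / N)) ^ 2 / (Real.sin (n * Real.pi / N)) ^ 2
    = -(l : ℝ) ^ 2 :=
  alternating_cycle_sum_general N l hNeven hl
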